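/- Let V be a multiplicative partial isometry on H⊗H, Δ(X) = V(X⊗1)V*, and A the right leg of V. Then the restriction of Δ to A is multiplicative: Δ(λ(ω))Δ(λ(ω')) = Δ(λ(ω)λ(ω')) for all ω, ω' ∈ L(H)*. -/
import Mathlib


open Matrix

namespace MPIpaper

variable {n : Type*} [Fintype n] [DecidableEq n]

noncomputable section

/-- `W₁₂ = W ⊗ 1` on `H ⊗ H ⊗ H`. -/
def leg12 (V : Matrix (n × n) (n × n) ℂ) : Matrix (n × n × n) (n × n × n) ℂ :=
  Matrix.of fun p q => V (p.1, p.2.1) (q.1, q.2.1) * (if p.2.2 = q.2.2 then (1 : ℂ) else 0)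

/-- `W₂₃ = 1 ⊗ W` on `H ⊗ H ⊗ H`. -/
def leg23 (V : Matrix (n × n) (n × n) ℂ) : Matrix (n × n × n) (n × n × n) ℂ :=
  Matrix.of fun p q => (if p.1 = q.1 then (1 : ℂ) else 0) * V p.2 q.2

/-- `W₁₃ = (1⊗Σ)(W⊗1)(1⊗Σ)` on `H ⊗ H ⊗ H`. -/
def leg13 (V : Matrix (n × n) (n × n) ℂ) : Matrix (n × n × n) (n × n × n) ℂ :=
  Matrix.of fun p q => V (p.1, p.2.2) (q.1, q.2.2) * (if p.2.1 = q.2.1 then (1 : ℂ) else 0)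

/-- A multiplicative partial isometry: `VV*V = V`, the pentagon equation, and the
three auxiliary (hexagon-type) equations. -/
def IsMPI (V : Matrix (n × n) (n × n) ℂ) : Prop :=
  V * Vᴴ * V = V ∧
  leg23 V * leg12 V = leg12 V * leg13 V * leg23 V ∧
  leg13 V * leg23 V * (leg23 V)ᴴ = (leg12 V)ᴴ * leg12 V * leg13 V ∧
  leg12 V * (leg12 V)ᴴ * leg23 V = leg23 V * leg12 V * (leg12 V)ᴴ ∧
  leg12 V * (leg23 V)ᴴ * leg23 V = (leg23 V)ᴴ * leg23 V * leg12 V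

/-- `λ(ω) = (ω ⊗ id)(V)`. -/
def lam (ω : Matrix n n ℂ →ₗ[ℂ] ℂ) (V : Matrix (n × n) (n × n) ℂ) : Matrix n n ℂ :=
  Matrix.of fun i j => ω (Matrix.of fun a b => V (a, i) (b, j))

/-- `ρ(ω) = (id ⊗ ω)(V)`. -/
def rho (ω : Matrix n n ℂ →ₗ[ℂ] ℂ) (V : Matrix (n × n) (n × n) ℂ) : Matrix n n ℂ :=
  Matrix.of fun i j => ω (Matrix.of fun a b => V (i, a) (j, b))

/-- `1 ⊗ X` on `H ⊗ H`. -/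
def oneTensor (X : Matrix n n ℂ) : Matrix (n × n) (n × n) ℂ :=
  Matrix.of fun p q => (if p.1 = q.1 then (1 : ℂ) else 0) * X p.2 q.2

/-- `X ⊗ 1` on `H ⊗ H`. -/
def tensorOne (X : Matrix n n ℂ) : Matrix (n × n) (n × n) ℂ :=
  Matrix.of fun p q => X p.1 q.1 * (if p.2 = q.2 then (1 : ℂ) else 0)

/-- `Δ(X) = V (X ⊗ 1) V*`. -/
def Delta (V : Matrix (n × n) (n × n) ℂ) (X : Matrix n n ℂ) : Matrix (n × n) (n × n) ℂ :=
  V * tensorOne X * Vᴴ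

/-- `Δ̂(X) = V* (1 ⊗ X) V`. -/
def hatDelta (V : Matrix (n × n) (n × n) ℂ) (X : Matrix n n ℂ) : Matrix (n × n) (n × n) ℂ :=
  Vᴴ * oneTensor X * V

/-- `(ω ⊗ ω')(W)` for an operator `W` on `H ⊗ H`. -/
def applyBoth (ω ω' : Matrix n n ℂ →ₗ[ℂ] ℂ) (W : Matrix (n × n) (n × n) ℂ) : ℂ :=
  ω (Matrix.of fun i j => ω' (Matrix.of fun k l => W (i, k) (j, l)))

end


omit [Fintype n] in
lemma leg23_conjT (V : Matrix (n × n) (n × n) ℂ) : (leg23 V)ᴴ = leg23 Vᴴ := by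
  ext ⟨a,b,c⟩ ⟨a',b',c'⟩
  simp [leg23, Matrix.conjTranspose_apply, eq_comm, apply_ite (starRingEnd ℂ)]

lemma leg23_mul (X Y : Matrix (n × n) (n × n) ℂ) : leg23 X * leg23 Y = leg23 (X * Y) := by
  ext ⟨a,b,c⟩ ⟨a',b',c'⟩
  simp [leg23, Matrix.mul_apply, Fintype.sum_prod_type, ite_mul, zero_mul, one_mul,
    Finset.mul_sum, mul_ite, mul_zero, mul_one]

lemma leg12_mul_leg23_apply (X W : Matrix (n × n) (n × n) ℂ) (a b c a' b' c' : n) :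
    (leg12 X * leg23 W) (a,b,c) (a',b',c') = ∑ m, X (a,b) (a',m) * W (m,c) (b',c') := by
  simp [leg12, leg23, Matrix.mul_apply, Fintype.sum_prod_type, ite_mul, zero_mul, one_mul,
    mul_ite, mul_zero, mul_one, Finset.sum_ite_eq, Finset.sum_ite_eq']

lemma leg23_mul_leg12_apply (X W : Matrix (n × n) (n × n) ℂ) (a b c a' b' c' : n) :
    (leg23 W * leg12 X) (a,b,c) (a',b',c') = ∑ m, W (b,c) (m,c') * X (a,m) (a',b') := by
  simp [leg12, leg23, Matrix.mul_apply, Fintype.sum_prod_type, ite_mul, zero_mul, one_mul,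
    mul_ite, mul_zero, mul_one, Finset.sum_ite_eq, Finset.sum_ite_eq']

lemma tensorOne_mul (X Y : Matrix n n ℂ) : tensorOne X * tensorOne Y = tensorOne (X * Y) := by
  ext ⟨i,j⟩ ⟨i',j'⟩
  simp [tensorOne, Matrix.mul_apply, Fintype.sum_prod_type, ite_mul, zero_mul, one_mul,
    mul_ite, mul_zero, mul_one, Finset.sum_ite_eq, Finset.sum_ite_eq', Finset.sum_mul]

lemma key_comm (V : Matrix (n × n) (n × n) ℂ) (hV : IsMPI V) (ω : Matrix n n ℂ →ₗ[ℂ] ℂ) :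
    Vᴴ * V * tensorOne (lam ω V) = tensorOne (lam ω V) * (Vᴴ * V) := by
  have h4 : leg12 V * leg23 (Vᴴ * V) = leg23 (Vᴴ * V) * leg12 V := by
    have := hV.2.2.2.2
    rwa [leg23_conjT, mul_assoc, leg23_mul] at this
  have hkey : ∀ a b c a' b' c' : n,
      (∑ m, V (a,b) (a',m) * (Vᴴ * V) (m,c) (b',c'))
        = ∑ m, (Vᴴ * V) (b,c) (m,c') * V (a,m) (a',b') := by
    intro a b c a' b' c'
    have h := congrFun (congrFun h4 (a,b,c)) (a',b',c')
    rwa [leg12_mul_leg23_apply, leg23_mul_leg12_apply] at h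
  ext ⟨i,j⟩ ⟨i',j'⟩
  have hL : (Vᴴ * V * tensorOne (lam ω V)) (i,j) (i',j')
      = ∑ k, (Vᴴ * V) (i,j) (k,j') * ω (Matrix.of fun a b => V (a,k) (b,i')) := by
    simp [Matrix.mul_apply, tensorOne, lam, Fintype.sum_prod_type, mul_ite, mul_zero, mul_one,
      Finset.sum_ite_eq, Finset.sum_ite_eq']
  have hR : (tensorOne (lam ω V) * (Vᴴ * V)) (i,j) (i',j')
      = ∑ k, ω (Matrix.of fun a b => V (a,i) (b,k)) * (Vᴴ * V) (k,j) (i',j') := by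
    simp [Matrix.mul_apply, tensorOne, lam, Fintype.sum_prod_type, ite_mul, zero_mul, one_mul,
      Finset.sum_ite_eq, Finset.sum_ite_eq']
  rw [hL, hR]
  calc (∑ k, (Vᴴ * V) (i,j) (k,j') * ω (Matrix.of fun a b => V (a,k) (b,i')))
      = ω (∑ k, (Vᴴ * V) (i,j) (k,j') • Matrix.of fun a b => V (a,k) (b,i')) := by
        rw [map_sum]; simp only [← Matrix.smul_of, _root_.map_smul, smul_eq_mul]
    _ = ω (∑ k, (Vᴴ * V) (k,j) (i',j') • Matrix.of fun a b => V (a,i) (b,k)) := by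
        congr 1
        ext a b
        simp only [Matrix.sum_apply, Matrix.smul_apply, Matrix.of_apply, smul_eq_mul]
        calc (∑ k, (Vᴴ * V) (i,j) (k,j') * V (a,k) (b,i'))
            = ∑ m, V (a,i) (b,m) * (Vᴴ * V) (m,j) (i',j') := (hkey a i j b i' j').symm
          _ = ∑ k, (Vᴴ * V) (k,j) (i',j') * V (a,i) (b,k) := by
              exact Finset.sum_congr rfl fun k _ => mul_comm _ _
    _ = ∑ k, ω (Matrix.of fun a b => V (a,i) (b,k)) * (Vᴴ * V) (k,j) (i',j') := by
        rw [map_sum]; simp only [← Matrix.smul_of, _root_.map_smul, smul_eq_mul]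
        exact Finset.sum_congr rfl fun k _ => mul_comm _ _

theorem statement9 (V : Matrix (n × n) (n × n) ℂ) (hV : IsMPI V)
    (ω ω' : Matrix n n ℂ →ₗ[ℂ] ℂ) :
    Delta V (lam ω V) * Delta V (lam ω' V) = Delta V (lam ω V * lam ω' V) := by
  have hVs : Vᴴ * (V * Vᴴ) = Vᴴ := by
    have := congrArg Matrix.conjTranspose hV.1
    simpa [Matrix.conjTranspose_mul, mul_assoc] using this
  unfold Delta
  calc V * tensorOne (lam ω V) * Vᴴ * (V * tensorOne (lam ω' V) * Vᴴ)
      = V * tensorOne (lam ω V) * (Vᴴ * V * tensorOne (lam ω' V)) * Vᴴ := by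
        simp only [mul_assoc]
    _ = V * tensorOne (lam ω V) * (tensorOne (lam ω' V) * (Vᴴ * V)) * Vᴴ := by
        rw [key_comm V hV ω']
    _ = V * (tensorOne (lam ω V) * tensorOne (lam ω' V)) * (Vᴴ * (V * Vᴴ)) := by
        simp only [mul_assoc]
    _ = V * tensorOne (lam ω V * lam ω' V) * Vᴴ := by rw [tensorOne_mul, hVs]


end MPIpaper
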